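/- arXiv:1603.02841 — 5 statements merged into one kernel-verified Lean document; each statement's English description precedes it below -/
import Mathlib

section
/- Let $d_1,\ldots,d_k$ be nonnegative integers with $d_1 = \cdots = d_j = K$ and $\max\{d_{j+1},\ldots,d_k\} < K$ for some $j < k$. Suppose $G$ is a finite graph that is not $(d_1,\ldots,d_k)$-colorable but every proper induced subgraph of $G$ is $(d_1,\ldots,d_k)$-colorable. Then every vertex of $G$ of degree at most $K+k-1$ has at least $j$ neighbors of degree at least $K+k$. -/
/-- A graph `G` is `(d 0, …, d (k-1))`-colorable if its vertex set can be partitioned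
into `k` parts such that part `i` induces a subgraph of maximum degree at most `d i`. -/
def ImpColorable {V : Type*} {k : ℕ} (G : SimpleGraph V) (d : Fin k → ℕ) : Prop :=
  ∃ f : V → Fin k, ∀ v : V, {u | G.Adj v u ∧ f u = f v}.ncard ≤ d (f v)

namespace LVH

open Finset
open scoped Classical

variable {V : Type*} [Fintype V] {k : ℕ}

/-- same-color neighbors of `u` within `G - v`. -/
noncomputable def AF (G : SimpleGraph V) (v : V) (f : V → Fin k) (u : V) : Finset V :=
  Finset.univ.filter (fun w => G.Adj u w ∧ w ≠ v ∧ f w = f u)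

/-- validity of a coloring of `G - v`. -/
def Valid (G : SimpleGraph V) (d : Fin k → ℕ) (v : V) (f : V → Fin k) : Prop :=
  ∀ u, u ≠ v → (AF G v f u).card ≤ d (f u)

/-- neighbors of `v` with color `c`. -/
noncomputable def Nv (G : SimpleGraph V) (v : V) (f : V → Fin k) (c : Fin k) : Finset V :=
  (Finset.univ.filter (fun w => G.Adj v w)).filter (fun w => f w = c)

lemma ncard_eq_filter (s : Set V) : s.ncard = (Finset.univ.filter (fun w => w ∈ s)).card := by
  classical
  rw [Set.ncard_eq_toFinset_card' s]
  congr 1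
  ext w
  simp

lemma exists_valid (G : SimpleGraph V) (d : Fin k → ℕ) (v : V) (hk : 0 < k)
    (hmin : ∀ S : Set V, S ≠ Set.univ → ImpColorable (G.induce S) d) :
    ∃ f : V → Fin k, Valid G d v f := by
  obtain ⟨g, hg⟩ := hmin {v}ᶜ (by
    intro h
    have : v ∈ ({v}ᶜ : Set V) := h ▸ Set.mem_univ v
    simp at this)
  set f : V → Fin k := fun x => if h : x = v then ⟨0, hk⟩ else g ⟨x, by simpa using h⟩ with hfdef
  refine ⟨f, ?_⟩
  intro u hu
  have hfu : f u = g ⟨u, by simpa using hu⟩ := by simp [hfdef, hu]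
  have key : ((AF G v f u : Finset V) : Set V)
      = Subtype.val '' {w : ({v}ᶜ : Set V) |
          (G.induce {v}ᶜ).Adj ⟨u, by simpa using hu⟩ w ∧ g w = g ⟨u, by simpa using hu⟩} := by
    ext w
    simp only [AF, coe_filter, Set.mem_setOf_eq, Finset.mem_univ, true_and, Set.mem_image]
    constructor
    · rintro ⟨hadj, hwv, hcol⟩
      refine ⟨⟨w, by simpa using hwv⟩, ⟨by simpa using hadj, ?_⟩, rfl⟩
      simpa [hfdef, hwv, hu] using hcol
    · rintro ⟨⟨w', hw'⟩, ⟨hadj, hcol⟩, rfl⟩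
      have hwv : w' ≠ v := by simpa using hw'
      refine ⟨by simpa using hadj, hwv, ?_⟩
      simpa [hfdef, hwv, hu] using hcol
  have h1 : ((AF G v f u : Finset V) : Set V).ncard ≤ d (g ⟨u, by simpa using hu⟩) := by
    rw [key, Set.ncard_image_of_injective _ Subtype.val_injective]
    exact hg _
  rw [Set.ncard_coe_finset] at h1
  rw [hfu]
  exact h1

lemma AF_eq (G : SimpleGraph V) (v : V) (f : V → Fin k) (u : V) :
    ((AF G v f u : Finset V) : Set V) = {w | G.Adj u w ∧ w ≠ v ∧ f w = f u} := by
  ext w; simp [AF]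

lemma blocked (G : SimpleGraph V) (d : Fin k → ℕ) (v : V) (f : V → Fin k)
    (hf : Valid G d v f) (hnc : ¬ ImpColorable G d) (c : Fin k) :
    d c < (Nv G v f c).card ∨ ∃ u ∈ Nv G v f c, d (f u) ≤ (AF G v f u).card := by
  by_contra hcon
  push_neg at hcon
  obtain ⟨h1, h2⟩ := hcon
  apply hnc
  refine ⟨Function.update f v c, ?_⟩
  intro x
  by_cases hx : x = v
  · subst hx
    have hset : {u | G.Adj x u ∧ Function.update f x c u = Function.update f x c x}
        = ((Nv G x f c : Finset V) : Set V) := by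
      ext w
      have : G.Adj x w → w ≠ x := fun h => (G.ne_of_adj h).symm
      constructor
      · rintro ⟨hadj, hcol⟩
        have hwx : w ≠ x := this hadj
        simp only [Finset.mem_coe, Nv, Finset.mem_filter, Finset.mem_univ, true_and]
        rw [Function.update_of_ne hwx, Function.update_self] at hcol
        exact ⟨hadj, hcol⟩
      · intro hw
        simp only [Finset.mem_coe, Nv, Finset.mem_filter, Finset.mem_univ, true_and] at hw
        obtain ⟨hadj, hcol⟩ := hw
        exact ⟨hadj, by rw [Function.update_of_ne (this hadj), Function.update_self]; exact hcol⟩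
    rw [hset, Set.ncard_coe_finset, Function.update_self]
    exact h1
  · have hfx : Function.update f v c x = f x := Function.update_of_ne hx _ _
    by_cases hadj : G.Adj x v ∧ f x = c
    · have hxN : x ∈ Nv G v f c := by
        simp only [Nv, Finset.mem_filter, Finset.mem_univ, true_and]
        exact ⟨hadj.1.symm, hadj.2⟩
      have hcard := h2 x hxN
      have hset : {u | G.Adj x u ∧ Function.update f v c u = Function.update f v c x}
          = insert v ((AF G v f x : Finset V) : Set V) := by
        rw [AF_eq]
        ext w
        by_cases hw : w = v
        · subst hw
          simp [hadj.1, hfx, hadj.2]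
        · simp only [Set.mem_setOf_eq, Set.mem_insert_iff, hw, false_or,
            Function.update_of_ne hw, hfx]
          tauto
      rw [hset, Set.ncard_insert_of_notMem (by rw [AF_eq]; simp),
        Set.ncard_coe_finset, hfx]
      omega
    · have hset : {u | G.Adj x u ∧ Function.update f v c u = Function.update f v c x}
          = ((AF G v f x : Finset V) : Set V) := by
        rw [AF_eq]
        ext w
        by_cases hw : w = v
        · subst hw
          simp only [Set.mem_setOf_eq, Function.update_self, hfx]
          constructor
          · rintro ⟨ha, hc⟩; exact absurd ⟨ha, hc.symm⟩ hadj
          · rintro ⟨-, h, -⟩; exact absurd rfl h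
        · simp only [Set.mem_setOf_eq, Function.update_of_ne hw, hfx, hw, ne_eq,
            not_false_iff, true_and]
      rw [hset, Set.ncard_coe_finset, hfx]
      exact hf x hx

lemma mem_AF {G : SimpleGraph V} {v : V} {f : V → Fin k} {u w : V} :
    w ∈ AF G v f u ↔ G.Adj u w ∧ w ≠ v ∧ f w = f u := by simp [AF]

lemma mem_Nv {G : SimpleGraph V} {v : V} {f : V → Fin k} {c : Fin k} {w : V} :
    w ∈ Nv G v f c ↔ G.Adj v w ∧ f w = c := by simp [Nv]

lemma sum_Nv (G : SimpleGraph V) (v : V) (f : V → Fin k) :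
    ∑ c : Fin k, (Nv G v f c).card = (Finset.univ.filter (fun w => G.Adj v w)).card := by
  rw [Finset.card_eq_sum_card_fiberwise (f := f) (t := Finset.univ)
    (fun x _ => Finset.mem_univ _)]
  apply Finset.sum_congr rfl
  intro c _
  congr 1

omit [Fintype V] in
lemma sum_fiber (f : V → Fin k) (s : Finset V) :
    ∑ c : Fin k, (s.filter (fun w => f w = c)).card = s.card := by
  rw [Finset.card_eq_sum_card_fiberwise (f := f) (t := Finset.univ)
    (fun x _ => Finset.mem_univ _)]

end LVH

/-- If `d 0 = ⋯ = d (j-1) = K`, all other `d i < K`, `G` is a finite graph that is not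
`(d 0, …, d (k-1))`-colorable but every proper induced subgraph of `G` is, then every
vertex of degree at most `K + k - 1` has at least `j` neighbors of degree at least `K + k`. -/
theorem low_vertex_high_neighbors {V : Type*} [Fintype V] {k j K : ℕ} (hjk : j < k)
    (G : SimpleGraph V) (d : Fin k → ℕ)
    (hd1 : ∀ i : Fin k, (i : ℕ) < j → d i = K)
    (hd2 : ∀ i : Fin k, j ≤ (i : ℕ) → d i < K)
    (hnc : ¬ ImpColorable G d)
    (hmin : ∀ S : Set V, S ≠ Set.univ → ImpColorable (G.induce S) d) :
    ∀ v : V, (G.neighborSet v).ncard ≤ K + k - 1 →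
      j ≤ {u | G.Adj v u ∧ K + k ≤ (G.neighborSet u).ncard}.ncard := by
  classical
  intro v hvdeg
  rcases Nat.eq_zero_or_pos j with hj0 | hj
  · simp [hj0]
  have hk1 : 0 < k := lt_of_le_of_lt (Nat.zero_le j) hjk
  have hK1 : 1 ≤ K := by
    have h := hd2 ⟨j, hjk⟩ (le_of_eq rfl)
    omega
  have hdeg : ∀ u : V, (G.neighborSet u).ncard
      = (Finset.univ.filter (fun w => G.Adj u w)).card := by
    intro u
    rw [LVH.ncard_eq_filter]
    congr 1
  -- a minimal valid coloring of `G - v`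
  obtain ⟨f₀, hf₀⟩ := LVH.exists_valid G d v hk1 hmin
  set S : (V → Fin k) → Finset V := fun f =>
    Finset.univ.filter (fun x =>
      x ≠ v ∧ (f x : ℕ) < j ∧ d (f x) ≤ (LVH.AF G v f x).card) with hSdef
  set P : ℕ → Prop := fun n => ∃ f, LVH.Valid G d v f ∧ (S f).card = n with hPdef
  have hP : ∃ n, P n := ⟨(S f₀).card, f₀, hf₀, rfl⟩
  obtain ⟨f, hf, hΦf⟩ := Nat.find_spec hP
  have hminΦ : ∀ g, LVH.Valid G d v g → (S f).card ≤ (S g).card := by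
    intro g hg
    rw [hΦf]
    exact Nat.find_min' hP ⟨g, hg, rfl⟩
  have hblocked := fun c => LVH.blocked G d v f hf hnc c
  have hdv : (Finset.univ.filter (fun w => G.Adj v w)).card ≤ K + k - 1 :=
    hdeg v ▸ hvdeg
  have hNne : ∀ c : Fin k, 0 < (LVH.Nv G v f c).card := by
    intro c
    rcases hblocked c with h | ⟨u, hu, -⟩
    · omega
    · exact Finset.card_pos.mpr ⟨u, hu⟩
  -- no color class of a `K`-color at `v` is too big
  have hsmall : ∀ i : Fin k, (i : ℕ) < j → (LVH.Nv G v f i).card ≤ K := by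
    intro i hi
    by_contra hbig
    push_neg at hbig
    have hsplit := Finset.add_sum_erase Finset.univ
      (fun c => (LVH.Nv G v f c).card) (Finset.mem_univ i)
    beta_reduce at hsplit
    have hrest : (Finset.univ.erase i).card
        ≤ ∑ c ∈ Finset.univ.erase i, (LVH.Nv G v f c).card := by
      rw [Finset.card_eq_sum_ones]
      exact Finset.sum_le_sum (fun c _ => hNne c)
    have hcard_erase : (Finset.univ.erase i).card = k - 1 := by
      rw [Finset.card_erase_of_mem (Finset.mem_univ i), Finset.card_univ, Fintype.card_fin]
    have htot := LVH.sum_Nv G v f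
    omega
  -- key claim: each K-color gives a high saturated neighbor
  have hkey : ∀ i : Fin k, (i : ℕ) < j →
      ∃ u ∈ LVH.Nv G v f i, K + k ≤ (G.neighborSet u).ncard := by
    intro i hi
    by_contra hcon
    push_neg at hcon
    have hdi : d i = K := hd1 i hi
    obtain ⟨u, huN, husat⟩ : ∃ u ∈ LVH.Nv G v f i, d (f u) ≤ (LVH.AF G v f u).card := by
      rcases hblocked i with h | h
      · exfalso; have := hsmall i hi; omega
      · exact h
    obtain ⟨hadjvu, hfu⟩ := LVH.mem_Nv.mp huN
    have huv : u ≠ v := (G.ne_of_adj hadjvu).symm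
    have hulow : (G.neighborSet u).ncard < K + k := hcon u huN
    set nbu : Finset V := Finset.univ.filter (fun w => G.Adj u w ∧ w ≠ v) with hnbu
    have hvnotin : v ∉ nbu := by simp [hnbu]
    have hins : insert v nbu = Finset.univ.filter (fun w => G.Adj u w) := by
      ext w
      by_cases hw : w = v
      · subst hw; simp [hnbu, hadjvu.symm]
      · simp [hnbu, hw]
    have hnbucard : nbu.card + 1 = (Finset.univ.filter (fun w => G.Adj u w)).card := by
      rw [← hins, Finset.card_insert_of_notMem hvnotin]
    have hdegu : (Finset.univ.filter (fun w => G.Adj u w)).card < K + k :=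
      hdeg u ▸ hulow
    have hAFnbu : LVH.AF G v f u = nbu.filter (fun w => f w = f u) := by
      ext w; simp [LVH.AF, hnbu, and_assoc]
    have hAFK : K ≤ (nbu.filter (fun w => f w = i)).card := by
      rw [← hfu, ← hAFnbu]
      rw [hfu, hdi] at husat
      exact husat
    -- find a color missing around u
    obtain ⟨c, hci, hcempty⟩ :
        ∃ c : Fin k, c ≠ i ∧ (nbu.filter (fun w => f w = c)) = ∅ := by
      by_contra hcc
      push_neg at hcc
      have hsum2 := LVH.sum_fiber f nbu
      have hsplit := Finset.add_sum_erase Finset.univ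
        (fun c => (nbu.filter (fun w => f w = c)).card) (Finset.mem_univ i)
      beta_reduce at hsplit
      have hrest : (Finset.univ.erase i).card
          ≤ ∑ c ∈ Finset.univ.erase i, (nbu.filter (fun w => f w = c)).card := by
        rw [Finset.card_eq_sum_ones]
        refine Finset.sum_le_sum (fun c hc => ?_)
        have hne := hcc c (Finset.ne_of_mem_erase hc)
        exact Finset.card_pos.mpr hne
      have hcard_erase : (Finset.univ.erase i).card = k - 1 := by
        rw [Finset.card_erase_of_mem (Finset.mem_univ i), Finset.card_univ, Fintype.card_fin]
      omega
    -- recolor u with c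
    set f' := Function.update f u c with hf'def
    have hf'u : f' u = c := Function.update_self u c f
    have hf'x : ∀ x, x ≠ u → f' x = f x := fun x hx => Function.update_of_ne hx c f
    have hAF'u : LVH.AF G v f' u = ∅ := by
      ext w
      simp only [LVH.mem_AF, Finset.notMem_empty, iff_false]
      rintro ⟨hadj, hwv, hcol⟩
      have hwu : w ≠ u := (G.ne_of_adj hadj).symm
      rw [hf'x w hwu, hf'u] at hcol
      have : w ∈ nbu.filter (fun w => f w = c) := by
        simp [hnbu, hadj, hwv, hcol]
      rw [hcempty] at this
      exact absurd this (Finset.notMem_empty w)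
    have hAF'sub : ∀ x, x ≠ u → x ≠ v → LVH.AF G v f' x ⊆ LVH.AF G v f x := by
      intro x hxu hxv w hw
      rw [LVH.mem_AF] at hw ⊢
      obtain ⟨hadj, hwv, hcol⟩ := hw
      rw [hf'x x hxu] at hcol
      by_cases hwu : w = u
      · exfalso
        subst hwu
        rw [hf'u] at hcol
        have hmem : x ∈ nbu.filter (fun w => f w = c) := by
          simp [hnbu, hadj.symm, hxv, hcol.symm]
        rw [hcempty] at hmem
        exact absurd hmem (Finset.notMem_empty x)
      · rw [hf'x w hwu] at hcol
        exact ⟨hadj, hwv, hcol⟩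
    have hf'valid : LVH.Valid G d v f' := by
      intro x hxv
      by_cases hxu : x = u
      · subst hxu
        rw [hAF'u]
        simp
      · rw [hf'x x hxu]
        exact le_trans (Finset.card_le_card (hAF'sub x hxu hxv)) (hf x hxv)
    -- the potential strictly decreases
    have hSS : S f' ⊂ S f := by
      have hsub : S f' ⊆ S f := by
        intro x hx
        rw [hSdef, Finset.mem_filter] at hx ⊢
        obtain ⟨-, hxv, hxj, hxsat⟩ := hx
        by_cases hxu : x = u
        · exfalso
          subst hxu
          rw [hf'u] at hxj hxsat
          rw [hAF'u] at hxsat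
          simp only [Finset.card_empty, Nat.le_zero] at hxsat
          have := hd1 c hxj
          omega
        · rw [hf'x x hxu] at hxj hxsat
          exact ⟨Finset.mem_univ x, hxv, hxj,
            le_trans hxsat (Finset.card_le_card (hAF'sub x hxu hxv))⟩
      refine ⟨hsub, fun hsup => ?_⟩
      have huS : u ∈ S f := by
        rw [hSdef, Finset.mem_filter]
        exact ⟨Finset.mem_univ u, huv, by rw [hfu]; exact hi, husat⟩
      have huS' := hsup huS
      rw [hSdef, Finset.mem_filter] at huS'
      obtain ⟨-, -, hxj, hxsat⟩ := huS'
      rw [hf'u] at hxj hxsat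
      rw [hAF'u] at hxsat
      simp only [Finset.card_empty, Nat.le_zero] at hxsat
      have := hd1 c hxj
      omega
    have hlt : (S f').card < (S f).card := Finset.card_lt_card hSS
    have := hminΦ f' hf'valid
    omega
  -- conclusion: build an injection from `Fin j` into the high neighbors
  choose uu huuN huuH using hkey
  set T := {u | G.Adj v u ∧ K + k ≤ (G.neighborSet u).ncard} with hT
  have hmem : ∀ (i : Fin k) (hi : (i : ℕ) < j), uu i hi ∈ T := by
    intro i hi
    exact ⟨(LVH.mem_Nv.mp (huuN i hi)).1, huuH i hi⟩
  set g : Fin j → T := fun i =>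
    ⟨uu ⟨i.1, i.2.trans hjk⟩ i.2, hmem ⟨i.1, i.2.trans hjk⟩ i.2⟩ with hg
  have hginj : Function.Injective g := by
    intro i1 i2 h
    have h' : uu ⟨i1.1, i1.2.trans hjk⟩ i1.2 = uu ⟨i2.1, i2.2.trans hjk⟩ i2.2 :=
      congrArg Subtype.val h
    have hc1 := (LVH.mem_Nv.mp (huuN ⟨i1.1, i1.2.trans hjk⟩ i1.2)).2
    have hc2 := (LVH.mem_Nv.mp (huuN ⟨i2.1, i2.2.trans hjk⟩ i2.2)).2
    rw [h'] at hc1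
    rw [hc1] at hc2
    have hval := congrArg (Fin.val (n := k)) hc2
    exact Fin.ext hval
  calc j = Nat.card (Fin j) := by simp
    _ ≤ Nat.card T := Nat.card_le_card_of_injective g hginj
    _ = T.ncard := Nat.card_coe_set_eq T
end

section
/- Let $d_1,\ldots,d_k$ be nonnegative integers with $d_1 = \cdots = d_j = K$ and $\max\{d_{j+1},\ldots,d_k\} < K$ for some $1 \le j < k$. Suppose $G$ is a finite graph that is not $(d_1,\ldots,d_k)$-colorable, but every proper induced subgraph of $G$ is $(d_1,\ldots,d_k)$-colorable. Then $G$ has at least $1+\sum_{i=2}^{k}(d_i+1)$ vertices of degree at least $K+k$. -/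
/-- If `d 0 = ⋯ = d (j-1) = K`, all other `d i < K`, and `G` is a finite graph that is not
`(d 0, …, d (k-1))`-colorable but every proper induced subgraph of `G` is, then `G` has at
least `1 + ∑_{i=2}^{k} (d i + 1)` vertices of degree at least `K + k` (the sum being over
all indices except the first). -/
theorem many_high_vertices {V : Type*} [Fintype V] {k j K : ℕ} (hj1 : 1 ≤ j) (hjk : j < k)
    (G : SimpleGraph V) (d : Fin k → ℕ)
    (hd1 : ∀ i : Fin k, (i : ℕ) < j → d i = K)
    (hd2 : ∀ i : Fin k, j ≤ (i : ℕ) → d i < K)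
    (hnc : ¬ ImpColorable G d)
    (hmin : ∀ S : Set V, S ≠ Set.univ → ImpColorable (G.induce S) d) :
    1 + ∑ i ∈ Finset.univ.filter (fun i : Fin k => (i : ℕ) ≠ 0), (d i + 1) ≤
      {v : V | K + k ≤ (G.neighborSet v).ncard}.ncard := by
  classical
  haveI : NeZero k := ⟨by omega⟩
  by_contra hgoal
  push_neg at hgoal
  apply hnc
  set s : Finset (Fin k) := Finset.univ.filter (fun i : Fin k => (i : ℕ) ≠ 0) with hs_def
  set Hs : Finset V := Finset.univ.filter (fun v => K + k ≤ (G.neighborSet v).ncard)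
    with hHs_def
  have hHset : {v : V | K + k ≤ (G.neighborSet v).ncard} = (Hs : Set V) := by
    ext v; simp [hHs_def]
  rw [hHset, Set.ncard_coe_finset] at hgoal
  have hHcard : Hs.card ≤ ∑ i ∈ s, (d i + 1) := by omega
  have h0val : ((0 : Fin k) : ℕ) = 0 := rfl
  have hd0 : d 0 = K := hd1 0 (by omega)
  -- Step 1: distribute the high vertices among colors 1,…,k-1 with bounded fibers.
  have hφex : ∃ φ : V → Fin k, (∀ v ∈ Hs, φ v ≠ 0) ∧
      ∀ i : Fin k, (Hs.filter fun v => φ v = i).card ≤ d i + 1 := by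
    obtain ⟨e⟩ : Nonempty (↥Hs ↪ Σ i : ↥s, Fin (d i + 1)) := by
      apply Function.Embedding.nonempty_of_card_le
      rw [Fintype.card_coe, Fintype.card_sigma]
      simp only [Fintype.card_fin]
      rwa [Finset.sum_coe_sort s (fun i => d i + 1)]
    refine ⟨fun v => if h : v ∈ Hs then ((e ⟨v, h⟩).1 : Fin k) else 0, ?_, ?_⟩
    · intro v hv h0
      have hmem := (e ⟨v, hv⟩).1.2
      simp only [dif_pos hv] at h0
      rw [h0] at hmem
      simp [hs_def] at hmem
    · intro i
      have hle := Finset.card_le_card_of_injOn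
        (f := fun v => if h : v ∈ Hs then ((e ⟨v, h⟩).2 : ℕ) else 0)
        (s := Hs.filter fun v => (if h : v ∈ Hs then ((e ⟨v, h⟩).1 : Fin k) else 0) = i)
        (t := Finset.range (d i + 1)) ?_ ?_
      · simpa using hle
      · intro v hv
        rw [Finset.mem_coe, Finset.mem_filter] at hv
        obtain ⟨hv1, hv2⟩ := hv
        simp only [dif_pos hv1] at hv2 ⊢
        rw [Finset.mem_coe, Finset.mem_range, ← hv2]
        exact (e ⟨v, hv1⟩).2.isLt
      · intro v hv v' hv' hvv'
        have hm := Finset.mem_coe.mp hv; rw [Finset.mem_filter] at hm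
        have hm' := Finset.mem_coe.mp hv'; rw [Finset.mem_filter] at hm'
        obtain ⟨h1, h2⟩ := hm
        obtain ⟨h1', h2'⟩ := hm'
        simp only [dif_pos h1] at h2
        simp only [dif_pos h1'] at h2'
        simp only [dif_pos h1, dif_pos h1'] at hvv'
        have hfst : ((e ⟨v, h1⟩).1 : Fin k) = ((e ⟨v', h1'⟩).1 : Fin k) := by rw [h2, h2']
        have hee : e ⟨v, h1⟩ = e ⟨v', h1'⟩ := by
          apply Sigma.ext
          · exact Subtype.ext hfst
          · rw [Fin.heq_ext_iff (by rw [hfst])]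
            exact hvv'
        have := e.injective hee
        exact congrArg Subtype.val this
  obtain ⟨φ, hφ0, hφcap⟩ := hφex
  -- Step 2: set up the potential minimization over feasible colorings.
  set Lf : Finset V := Hsᶜ with hLf_def
  set N : ℕ := ∏ i : Fin k, (d i + 1) with hN_def
  have hNpos : 0 < N := Finset.prod_pos (fun i _ => Nat.succ_pos _)
  set w : Fin k → ℕ := fun i => N / (d i + 1) with hw_def
  have hwmul : ∀ i, w i * (d i + 1) = N := fun i =>
    Nat.div_mul_cancel (Finset.dvd_prod_of_mem _ (Finset.mem_univ i))
  have hwpos : ∀ i, 0 < w i := by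
    intro i
    rcases Nat.eq_zero_or_pos (w i) with h | h
    · exfalso; have := hwmul i; rw [h, zero_mul] at this; omega
    · exact h
  set Feas : (V → Fin k) → Prop := fun g =>
    (∀ u ∈ Hs, g u = φ u) ∧ ∀ x, x ∉ Hs → ∀ u ∈ Hs, G.Adj x u → g x ≠ φ u with hFeas_def
  set Φ : (V → Fin k) → ℕ := fun g =>
    ∑ x ∈ Lf, ∑ u ∈ Lf, if G.Adj x u ∧ g u = g x then w (g x) else 0 with hΦ_def
  have hfeas0 : Feas (fun v => if v ∈ Hs then φ v else 0) := by
    simp only [hFeas_def]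
    constructor
    · intro u hu; simp [hu]
    · intro x hx u hu _
      simp only [if_neg hx]
      exact fun h => hφ0 u hu h.symm
  obtain ⟨g, hgmem, hgmin⟩ := Finset.exists_min_image
    (Finset.univ.filter fun g => Feas g) Φ
    ⟨_, Finset.mem_filter.mpr ⟨Finset.mem_univ _, hfeas0⟩⟩
  have hgfeas : Feas g := (Finset.mem_filter.mp hgmem).2
  rw [hFeas_def] at hgfeas
  obtain ⟨hgH, hgL⟩ := hgfeas
  -- Step 3: the minimizer is a valid coloring.
  refine ⟨g, ?_⟩
  intro v
  have hset : {u | G.Adj v u ∧ g u = g v} =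
      ((Finset.univ.filter fun u => G.Adj v u ∧ g u = g v : Finset V) : Set V) := by
    ext u; simp
  rw [hset, Set.ncard_coe_finset]
  by_cases hv : v ∈ Hs
  · -- high vertex: its class contains only high vertices of the same φ-fiber
    have hsub : (Finset.univ.filter fun u => G.Adj v u ∧ g u = g v) ⊆
        (Hs.filter fun u => φ u = φ v).erase v := by
      intro u hu
      rw [Finset.mem_filter] at hu
      obtain ⟨-, hadj, hcol⟩ := hu
      have huH : u ∈ Hs := by
        by_contra huH
        exact hgL u huH v hv hadj.symm (by rw [hcol, hgH v hv])
      refine Finset.mem_erase.mpr ⟨hadj.ne', Finset.mem_filter.mpr ⟨huH, ?_⟩⟩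
      rw [← hgH u huH, hcol, hgH v hv]
    have hle := Finset.card_le_card hsub
    have hvmem : v ∈ Hs.filter (fun u => φ u = φ v) := Finset.mem_filter.mpr ⟨hv, rfl⟩
    rw [Finset.card_erase_of_mem hvmem] at hle
    have hcap := hφcap (φ v)
    have hn1 : 1 ≤ (Hs.filter fun u => φ u = φ v).card := Finset.card_pos.mpr ⟨v, hvmem⟩
    have hdv : d (g v) = d (φ v) := by rw [hgH v hv]
    omega
  · -- low vertex
    by_contra hcon
    push_neg at hcon
    have hvL : v ∈ Lf := Finset.mem_compl.mpr hv
    set DL : Fin k → ℕ := fun c => (Lf.filter fun u => G.Adj v u ∧ g u = c).card with hDL_def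
    -- all same-colored neighbors of v are low
    have hAeq : (Finset.univ.filter fun u => G.Adj v u ∧ g u = g v) =
        Lf.filter fun u => G.Adj v u ∧ g u = g v := by
      ext u
      simp only [Finset.mem_filter, Finset.mem_univ, true_and, hLf_def, Finset.mem_compl]
      constructor
      · rintro ⟨hadj, hcol⟩
        refine ⟨?_, hadj, hcol⟩
        intro huH
        exact hgL v hv u huH hadj (by rw [← hcol, hgH u huH])
      · tauto
    have hDLv : d (g v) + 1 ≤ DL (g v) := by
      simp only [hDL_def]
      rw [hAeq] at hcon
      omega
    -- the forbidden color set F for v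
    set F : Finset (Fin k) := (Hs.filter fun u => G.Adj v u).image φ with hF_def
    have h0F : (0 : Fin k) ∉ F := by
      intro h0
      rw [hF_def, Finset.mem_image] at h0
      obtain ⟨u, hu, hu0⟩ := h0
      exact hφ0 u (Finset.mem_filter.mp hu).1 hu0
    have h0c : (0 : Fin k) ∈ Fᶜ := Finset.mem_compl.mpr h0F
    -- counting claim
    have claim1 : K + k ≤ F.card + ∑ m ∈ Fᶜ, (d m + 1) := by
      have hsplit : ∑ m ∈ Fᶜ, (d m + 1) = (d 0 + 1) + ∑ m ∈ Fᶜ.erase 0, (d m + 1) :=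
        (Finset.add_sum_erase _ _ h0c).symm
      have hrest : (Fᶜ.erase 0).card ≤ ∑ m ∈ Fᶜ.erase 0, (d m + 1) := by
        calc (Fᶜ.erase 0).card = ∑ _m ∈ Fᶜ.erase 0, 1 := (Finset.card_eq_sum_ones _)
          _ ≤ ∑ m ∈ Fᶜ.erase 0, (d m + 1) := Finset.sum_le_sum (fun i _ => by omega)
      have hcompl : F.card + Fᶜ.card = k := by
        rw [Finset.card_add_card_compl]
        simp
      have hce : (Fᶜ.erase 0).card = Fᶜ.card - 1 := Finset.card_erase_of_mem h0c
      have hc1 : 1 ≤ Fᶜ.card := Finset.card_pos.mpr ⟨0, h0c⟩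
      rw [hsplit, hd0]
      omega
    -- degree counting
    have hldeg : ∑ m : Fin k, DL m = (Lf.filter fun u => G.Adj v u).card := by
      rw [Finset.card_eq_sum_card_fiberwise
        (f := g) (t := Finset.univ) (fun x _ => Finset.mem_univ _)]
      apply Finset.sum_congr rfl
      intro m _
      simp only [hDL_def]
      congr 1
      rw [Finset.filter_filter]
    have hpart : (Hs.filter fun u => G.Adj v u).card + (Lf.filter fun u => G.Adj v u).card
        = (Finset.univ.filter fun u => G.Adj v u).card := by
      have hsplit := Finset.card_filter_add_card_filter_not
        (s := Finset.univ.filter fun u => G.Adj v u) (p := fun u => u ∈ Hs)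
      have e1 : ((Finset.univ.filter fun u => G.Adj v u).filter fun u => u ∈ Hs)
          = Hs.filter fun u => G.Adj v u := by
        ext u; simp only [Finset.mem_filter, Finset.mem_univ, true_and]; tauto
      have e2 : ((Finset.univ.filter fun u => G.Adj v u).filter fun u => ¬ u ∈ Hs)
          = Lf.filter fun u => G.Adj v u := by
        ext u
        simp only [Finset.mem_filter, Finset.mem_univ, true_and, hLf_def, Finset.mem_compl]
        tauto
      rw [e1, e2] at hsplit
      exact hsplit
    have hdegv : (Finset.univ.filter fun u => G.Adj v u).card + 1 ≤ K + k := by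
      have hv' : ¬ K + k ≤ (G.neighborSet v).ncard := by
        intro hle
        exact hv (by rw [hHs_def]; exact Finset.mem_filter.mpr ⟨Finset.mem_univ _, hle⟩)
      have hnb : (G.neighborSet v) =
          ((Finset.univ.filter fun u => G.Adj v u : Finset V) : Set V) := by
        ext u; simp [SimpleGraph.mem_neighborSet]
      rw [hnb, Set.ncard_coe_finset] at hv'
      omega
    have htle : F.card ≤ (Hs.filter fun u => G.Adj v u).card := by
      rw [hF_def]; exact Finset.card_image_le
    -- find a good recoloring target m
    obtain ⟨m, hmF, hmDL⟩ : ∃ m ∈ Fᶜ, DL m ≤ d m := by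
      by_contra hno
      push_neg at hno
      have h1 : ∑ m ∈ Fᶜ, (d m + 1) ≤ ∑ m ∈ Fᶜ, DL m :=
        Finset.sum_le_sum (fun m hmm => by have := hno m hmm; omega)
      have h2 : ∑ m ∈ Fᶜ, DL m ≤ ∑ m : Fin k, DL m :=
        Finset.sum_le_sum_of_subset (Finset.subset_univ _)
      omega
    -- the recoloring
    set g' : V → Fin k := Function.update g v m with hg'_def
    have hg'ne : ∀ u, u ≠ v → g' u = g u := fun u hu => Function.update_of_ne hu _ _
    have hg'v : g' v = m := Function.update_self _ _ _
    have hg'feas : Feas g' := by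
      rw [hFeas_def]
      constructor
      · intro u hu
        rw [hg'ne u (fun h => hv (h ▸ hu))]
        exact hgH u hu
      · intro x hx u hu hadj
        by_cases hxv : x = v
        · subst hxv
          rw [hg'v]
          intro hmφ
          apply Finset.mem_compl.mp hmF
          rw [hF_def, Finset.mem_image]
          exact ⟨u, Finset.mem_filter.mpr ⟨hu, hadj⟩, hmφ.symm⟩
        · rw [hg'ne x hxv]
          exact hgL x hx u hu hadj
    have hDL' : ∀ c, (Lf.filter fun u => G.Adj v u ∧ g' u = c).card = DL c := by
      intro c
      simp only [hDL_def]
      congr 1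
      apply Finset.filter_congr
      intro u _
      by_cases huv : u = v
      · subst huv; simp [G.irrefl]
      · rw [hg'ne u huv]
    -- expansion of the potential around v
    have expand : ∀ h : V → Fin k,
        Φ h = (∑ x ∈ Lf.erase v, ∑ u ∈ Lf.erase v,
            if G.Adj x u ∧ h u = h x then w (h x) else 0)
          + 2 * (w (h v) * (Lf.filter fun u => G.Adj v u ∧ h u = h v).card) := by
      intro h
      have hrowv : ∀ c : Fin k, (∑ u ∈ Lf, if G.Adj v u ∧ h u = c then w c else 0)
          = w c * (Lf.filter fun u => G.Adj v u ∧ h u = c).card := by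
        intro c
        rw [← Finset.sum_filter, Finset.sum_const, smul_eq_mul, mul_comm]
      have hcolv : (∑ x ∈ Lf.erase v, if G.Adj x v ∧ h v = h x then w (h x) else 0)
          = w (h v) * (Lf.filter fun u => G.Adj v u ∧ h u = h v).card := by
        have hcongr : ∀ x, (if G.Adj x v ∧ h v = h x then w (h x) else 0)
            = (if G.Adj v x ∧ h x = h v then w (h v) else 0) := by
          intro x
          by_cases hc : G.Adj x v ∧ h v = h x
          · rw [if_pos hc, if_pos ⟨hc.1.symm, hc.2.symm⟩, hc.2]
          · rw [if_neg hc, if_neg (fun hc' => hc ⟨hc'.1.symm, hc'.2.symm⟩)]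
        calc (∑ x ∈ Lf.erase v, if G.Adj x v ∧ h v = h x then w (h x) else 0)
            = ∑ x ∈ Lf.erase v, if G.Adj v x ∧ h x = h v then w (h v) else 0 :=
              Finset.sum_congr rfl (fun x _ => hcongr x)
          _ = ∑ x ∈ Lf, if G.Adj v x ∧ h x = h v then w (h v) else 0 := by
              rw [← Finset.sum_erase_add Lf _ hvL, if_neg (by simp [G.irrefl]), add_zero]
          _ = w (h v) * (Lf.filter fun u => G.Adj v u ∧ h u = h v).card := hrowv (h v)
      rw [hΦ_def]
      simp only []
      rw [← Finset.sum_erase_add Lf _ hvL]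
      rw [hrowv (h v)]
      have hinner : ∀ x ∈ Lf.erase v,
          (∑ u ∈ Lf, if G.Adj x u ∧ h u = h x then w (h x) else 0)
          = (∑ u ∈ Lf.erase v, if G.Adj x u ∧ h u = h x then w (h x) else 0)
            + (if G.Adj x v ∧ h v = h x then w (h x) else 0) := by
        intro x _
        rw [Finset.sum_erase_add Lf _ hvL]
      rw [Finset.sum_congr rfl hinner, Finset.sum_add_distrib, hcolv]
      ring
    have hCeq : (∑ x ∈ Lf.erase v, ∑ u ∈ Lf.erase v,
          if G.Adj x u ∧ g' u = g' x then w (g' x) else 0)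
        = ∑ x ∈ Lf.erase v, ∑ u ∈ Lf.erase v,
          if G.Adj x u ∧ g u = g x then w (g x) else 0 := by
      apply Finset.sum_congr rfl
      intro x hx
      apply Finset.sum_congr rfl
      intro u hu
      rw [hg'ne x (Finset.ne_of_mem_erase hx), hg'ne u (Finset.ne_of_mem_erase hu)]
    have hΦg : Φ g = (∑ x ∈ Lf.erase v, ∑ u ∈ Lf.erase v,
        if G.Adj x u ∧ g u = g x then w (g x) else 0) + 2 * (w (g v) * DL (g v)) := by
      rw [expand g]
    have hΦg' : Φ g' = (∑ x ∈ Lf.erase v, ∑ u ∈ Lf.erase v,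
        if G.Adj x u ∧ g u = g x then w (g x) else 0) + 2 * (w m * DL m) := by
      rw [expand g', hCeq, hg'v, hDL' m]
    have hlt : w m * DL m < w (g v) * DL (g v) := by
      calc w m * DL m ≤ w m * d m := Nat.mul_le_mul_left _ hmDL
        _ < w m * (d m + 1) := (Nat.mul_lt_mul_left (hwpos m)).mpr (by omega)
        _ = N := hwmul m
        _ = w (g v) * (d (g v) + 1) := (hwmul _).symm
        _ ≤ w (g v) * DL (g v) := Nat.mul_le_mul_left _ hDLv
    have hΦlt : Φ g' < Φ g := by omega
    have hmin' := hgmin g' (Finset.mem_filter.mpr ⟨Finset.mem_univ _, hg'feas⟩)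
    omega
end

section
/- For every integer $k \ge 0$, the graph $S(K_4, k+1)$ is not $(0,0,0,k)$-colorable. That is, for any partition of its vertex set into four parts where the first three parts are independent sets, the subgraph induced by the fourth part has a vertex of degree at least $k+1$. -/
/-- The graph `S(H,ℓ)`: a basic copy of `H` (the `Sum.inl` part) together with, for each
vertex `v` of the basic copy and each index `i : Fin ℓ`, a fresh copy of `H` all of whose
vertices are joined to `v`. -/
def sGraph {V : Type*} (H : SimpleGraph V) (ℓ : ℕ) : SimpleGraph (V ⊕ V × Fin ℓ × V) :=
  SimpleGraph.fromRel (fun x y =>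
    match x, y with
    | .inl u, .inl w => H.Adj u w
    | .inl v, .inr (v', _, _) => v = v'
    | .inr (v, i, u), .inr (v', i', u') => v = v' ∧ i = i' ∧ H.Adj u u'
    | _, _ => False)

set_option maxRecDepth 4000 in
lemma pigeon4 : ∀ c : Fin 4 → Fin 4, (∀ a, c a ≠ 3) → ∃ a b, a ≠ b ∧ c a = c b := by
  decide

/-- In any graph satisfying the `(0,0,0,k)` degree condition, every 4-clique contains a
vertex of color 3. -/
lemma clique_has_three {V : Type*} [Finite V] {k : ℕ} (G : SimpleGraph V) (f : V → Fin 4)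
    (hf : ∀ v : V, {u | G.Adj v u ∧ f u = f v}.ncard ≤ (![0, 0, 0, k] : Fin 4 → ℕ) (f v))
    (g : Fin 4 → V) (hg : ∀ a b : Fin 4, a ≠ b → G.Adj (g a) (g b)) :
    ∃ a, f (g a) = 3 := by
  by_contra hc
  push_neg at hc
  obtain ⟨a, b, hab, heq⟩ := pigeon4 (fun x => f (g x)) hc
  have hmem : g a ∈ {u | G.Adj (g b) u ∧ f u = f (g b)} := ⟨hg b a (Ne.symm hab), heq⟩
  have h1 : 0 < {u | G.Adj (g b) u ∧ f u = f (g b)}.ncard :=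
    (Set.ncard_pos (Set.toFinite _)).mpr ⟨_, hmem⟩
  have h2 := hf (g b)
  have h3 : (![0, 0, 0, k] : Fin 4 → ℕ) (f (g b)) = 0 := by
    have hb := hc b
    revert hb
    generalize f (g b) = i
    intro hb
    fin_cases i <;> simp_all
  omega

/-- For every `k ≥ 0`, the graph `S(K₄, k+1)` is not `(0,0,0,k)`-colorable. -/
theorem sGraph_K4_not_000k_colorable (k : ℕ) :
    ¬ ImpColorable (sGraph (SimpleGraph.completeGraph (Fin 4)) (k + 1)) ![0, 0, 0, k] := by
  rintro ⟨f, hf⟩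
  set G := sGraph (SimpleGraph.completeGraph (Fin 4)) (k + 1) with hG
  -- base copy is a 4-clique
  have hbase : ∀ a b : Fin 4, a ≠ b → G.Adj (Sum.inl a) (Sum.inl b) := by
    intro a b hab
    rw [hG, sGraph, SimpleGraph.fromRel_adj]
    exact ⟨by simp [hab], Or.inl hab⟩
  obtain ⟨a, ha⟩ := clique_has_three G f hf Sum.inl hbase
  -- each satellite copy is a 4-clique
  have hsat : ∀ i : Fin (k + 1), ∃ u : Fin 4,
      f (Sum.inr (a, i, u)) = 3 := by
    intro i
    refine clique_has_three G f hf (fun u => Sum.inr (a, i, u)) ?_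
    intro x y hxy
    rw [hG, sGraph, SimpleGraph.fromRel_adj]
    exact ⟨by simp [hxy], Or.inl ⟨rfl, rfl, hxy⟩⟩
  choose u hu using hsat
  -- all these color-3 satellite vertices are neighbors of `Sum.inl a`
  have hadj : ∀ i : Fin (k + 1), G.Adj (Sum.inl a) (Sum.inr (a, i, u i)) := by
    intro i
    rw [hG, sGraph, SimpleGraph.fromRel_adj]
    exact ⟨by simp, Or.inl rfl⟩
  have hsub : Set.range (fun i : Fin (k + 1) =>
        (Sum.inr (a, i, u i) : Fin 4 ⊕ Fin 4 × Fin (k + 1) × Fin 4)) ⊆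
      {w | G.Adj (Sum.inl a) w ∧ f w = 3} := by
    rintro _ ⟨i, rfl⟩
    exact ⟨hadj i, hu i⟩
  have hinj : Function.Injective (fun i : Fin (k + 1) =>
      (Sum.inr (a, i, u i) : Fin 4 ⊕ Fin 4 × Fin (k + 1) × Fin 4)) := by
    intro i j h
    exact congrArg Prod.fst (congrArg Prod.snd (Sum.inr.inj h))
  have hc1 : (Set.range (fun i : Fin (k + 1) =>
      (Sum.inr (a, i, u i) : Fin 4 ⊕ Fin 4 × Fin (k + 1) × Fin 4))).ncard = k + 1 := by
    rw [← Set.image_univ, Set.ncard_image_of_injective _ hinj, Set.ncard_univ]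
    simp
  have hle := Set.ncard_le_ncard hsub (Set.toFinite _)
  have h2 := hf (Sum.inl a)
  rw [ha] at h2
  simp only [Matrix.cons_val_three, Matrix.cons_val_two, Matrix.tail_cons, Matrix.head_cons] at h2
  omega
end

section
/- For every integer $k \ge 0$, the graph $S(K_7, k+1)$ is not $(2,2,k)$-colorable. That is, there is no partition of its vertex set into three parts where the first two parts induce subgraphs of maximum degree at most 2 and the third part induces a subgraph of maximum degree at most $k$. -/
lemma sGraph_adj_inl_inr {V : Type*} (H : SimpleGraph V) {ℓ : ℕ} (v : V) (i : Fin ℓ) (u : V) :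
    (sGraph H ℓ).Adj (.inl v) (.inr (v, i, u)) := by
  simp [sGraph, SimpleGraph.fromRel_adj]

lemma sGraph_adj_inl_inl {ℓ : ℕ} {u w : Fin 7} (h : u ≠ w) :
    (sGraph (SimpleGraph.completeGraph (Fin 7)) ℓ).Adj (.inl u) (.inl w) := by
  simp [sGraph, SimpleGraph.fromRel_adj, SimpleGraph.completeGraph, h]

lemma sGraph_adj_inr_inr {ℓ : ℕ} (v : Fin 7) (i : Fin ℓ) {u w : Fin 7} (h : u ≠ w) :
    (sGraph (SimpleGraph.completeGraph (Fin 7)) ℓ).Adj (.inr (v, i, u)) (.inr (v, i, w)) := by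
  simp [sGraph, SimpleGraph.fromRel_adj, SimpleGraph.completeGraph, h]

/-- In any 7-clique of a (2,2,k)-bounded-colored graph, some vertex has color 2. -/
lemma clique_pigeonhole {W : Type*} [Finite W] (G : SimpleGraph W) (f : W → Fin 3) (k : ℕ)
    (hb : ∀ v : W, {u | G.Adj v u ∧ f u = f v}.ncard ≤ ![2, 2, k] (f v))
    (e : Fin 7 → W) (he : Function.Injective e)
    (hadj : ∀ u w : Fin 7, u ≠ w → G.Adj (e u) (e w)) :
    ∃ u, f (e u) = 2 := by
  classical
  by_contra h
  push_neg at h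
  have h01 : ∀ w, f (e w) = 0 ∨ f (e w) = 1 := by
    intro w
    have hw := h w
    revert hw
    generalize f (e w) = c
    intro hw
    fin_cases c <;> simp_all
  set A := Finset.univ.filter (fun w : Fin 7 => f (e w) = 0) with hA
  set B := Finset.univ.filter (fun w : Fin 7 => f (e w) = 1) with hB
  have hUnion : (Finset.univ : Finset (Fin 7)) ⊆ A ∪ B := by
    intro w _
    rcases h01 w with hw | hw <;> simp [hA, hB, hw]
  have hcard : 7 ≤ A.card + B.card := by
    calc 7 = (Finset.univ : Finset (Fin 7)).card := by simp
    _ ≤ (A ∪ B).card := Finset.card_le_card hUnion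
    _ ≤ A.card + B.card := Finset.card_union_le _ _
  have hbig : ∃ c : Fin 3, ![2, 2, k] c = 2 ∧
      4 ≤ (Finset.univ.filter (fun w : Fin 7 => f (e w) = c)).card := by
    rcases le_or_gt 4 A.card with hA4 | hA4
    · exact ⟨0, by simp, by rw [hA] at hA4; exact hA4⟩
    · exact ⟨1, by simp, by rw [hA] at hA4; rw [hA, hB] at hcard; omega⟩
  obtain ⟨c, hc2, hc4⟩ := hbig
  have hne : (Finset.univ.filter (fun w : Fin 7 => f (e w) = c)).Nonempty :=
    Finset.card_pos.mp (by omega)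
  obtain ⟨u, hu⟩ := hne
  have hfu : f (e u) = c := (Finset.mem_filter.mp hu).2
  set S : Set (Fin 7) := {w | f (e w) = c} with hSdef
  have hS : 4 ≤ S.ncard := by
    rw [Set.ncard_eq_toFinset_card']
    convert hc4 using 2
    simp [hSdef]
  have huS : u ∈ S := hfu
  have hT : 3 ≤ (S \ {u}).ncard := by
    rw [Set.ncard_diff_singleton_of_mem huS]
    omega
  have hsub : e '' (S \ {u}) ⊆ {x | G.Adj (e u) x ∧ f x = f (e u)} := by
    rintro x ⟨w, ⟨hwS, hwu⟩, rfl⟩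
    have hwu' : w ≠ u := by simpa using hwu
    exact ⟨hadj u w hwu'.symm, by rw [show f (e w) = c from hwS, hfu]⟩
  have hle : (e '' (S \ {u})).ncard ≤ ![2, 2, k] (f (e u)) :=
    le_trans (Set.ncard_le_ncard hsub (Set.toFinite _)) (hb (e u))
  rw [Set.ncard_image_of_injective _ he, hfu, hc2] at hle
  omega

/-- For every `k ≥ 0`, the graph `S(K₇, k+1)` is not `(2,2,k)`-colorable. -/
theorem sGraph_K7_not_22k_colorable (k : ℕ) :
    ¬ ImpColorable (sGraph (SimpleGraph.completeGraph (Fin 7)) (k + 1)) ![2, 2, k] := by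
  rintro ⟨f, hf⟩
  set G := sGraph (SimpleGraph.completeGraph (Fin 7)) (k + 1) with hG
  obtain ⟨v, hv⟩ := clique_pigeonhole G f k hf (fun u => .inl u)
    (fun a b hab => by simpa using hab) (fun a b hab => sGraph_adj_inl_inl hab)
  have hcopy : ∀ i : Fin (k + 1), ∃ u, f (.inr (v, i, u)) = 2 := fun i =>
    clique_pigeonhole G f k hf (fun u => .inr (v, i, u))
      (fun a b hab => by simpa using hab)
      (fun a b hab => sGraph_adj_inr_inr v i hab)
  choose u hu using hcopy
  set g : Fin (k + 1) → Fin 7 ⊕ Fin 7 × Fin (k + 1) × Fin 7 :=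
    fun i => Sum.inr (v, i, u i) with hg
  have hinj : Function.Injective g := by
    intro i j hij
    simp [hg] at hij
    exact hij.1
  have hsub : Set.range g ⊆ {x | G.Adj (.inl v) x ∧ f x = f (.inl v)} := by
    rintro x ⟨i, rfl⟩
    exact ⟨sGraph_adj_inl_inr _ v i (u i), by rw [hg]; simp only; rw [hu i, hv]⟩
  have hcard : k + 1 ≤ {x | G.Adj (.inl v) x ∧ f x = f (.inl v)}.ncard := by
    have hlecard := Set.ncard_le_ncard hsub (Set.toFinite _)
    rwa [← Set.image_univ, Set.ncard_image_of_injective _ hinj, Set.ncard_univ,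
      Nat.card_eq_fintype_card, Fintype.card_fin] at hlecard
  have hbound := hf (.inl v)
  have hk : ![2, 2, k] (f (.inl v)) = k := by rw [hv]; rfl
  omega
end

section
/- Let $G$ be a finite triangle-free graph and let $S$ be the set of vertices of degree at least $K+3$ for some $K \ge 4$. Suppose $|S| \le 5$, every vertex not in $S$ has degree at most $K+2$, and every vertex has at least one neighbor (arbitrary degree conditions elsewhere). Then $G$ is $(0,0,K)$-colorable: its vertex set partitions into two independent sets and a set inducing maximum degree at most $K$. -/
def pr : ℕ → ℕ × ℕ
  | 0 => (0,1) | 1 => (0,2) | 2 => (0,3) | 3 => (0,4)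
  | 4 => (1,2) | 5 => (1,3) | 6 => (1,4)
  | 7 => (2,3) | 8 => (2,4) | 9 => (3,4)
  | _ => (0,0)

def adjB (m i j : ℕ) : Bool :=
  (List.range 10).any fun e => m.testBit e &&
    (((pr e).1 == i && (pr e).2 == j) || ((pr e).1 == j && (pr e).2 == i))

def triFreeB (m : ℕ) : Bool :=
  ([(0,1,2),(0,1,3),(0,1,4),(0,2,3),(0,2,4),(0,3,4),(1,2,3),(1,2,4),(1,3,4),(2,3,4)] :
    List (ℕ×ℕ×ℕ)).all fun t => !(adjB m t.1 t.2.1 && adjB m t.2.1 t.2.2 && adjB m t.1 t.2.2)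

def properB (m c : ℕ) : Bool :=
  (List.range 10).all fun e => !(m.testBit e) || (c.testBit (pr e).1 != c.testBit (pr e).2)

def cycB (m : ℕ) (q : Fin 5 × Fin 5 × Fin 5 × Fin 5 × Fin 5) : Bool :=
  match q with
  | (a,b,c,d,e) =>
    (a.val != b.val) && (a.val != c.val) && (a.val != d.val) && (a.val != e.val) &&
    (b.val != c.val) && (b.val != d.val) && (b.val != e.val) &&
    (c.val != d.val) && (c.val != e.val) && (d.val != e.val) &&
    adjB m a.val b.val && adjB m b.val c.val && adjB m c.val d.val &&
    adjB m d.val e.val && adjB m e.val a.val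

set_option maxRecDepth 100000 in
set_option maxHeartbeats 3000000 in
lemma dec5' : ∀ m1 m2 : Fin 32, triFreeB (m1.val*32+m2.val) = true →
    (∃ c : Fin 32, properB (m1.val*32+m2.val) c.val = true) ∨
    (∃ q : Fin 5 × Fin 5 × Fin 5 × Fin 5 × Fin 5, cycB (m1.val*32+m2.val) q = true) := by
  decide

lemma dec5 (m : ℕ) (hm : m < 1024) (h : triFreeB m = true) :
    (∃ c : Fin 32, properB m c = true) ∨
    (∃ q : Fin 5 × Fin 5 × Fin 5 × Fin 5 × Fin 5, cycB m q = true) := by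
  have h32 : m / 32 < 32 := by omega
  have := dec5' ⟨m / 32, h32⟩ ⟨m % 32, Nat.mod_lt _ (by norm_num)⟩
  simp only [Fin.val_mk] at this
  rw [show m / 32 * 32 + m % 32 = m by omega] at this
  exact this h


lemma fin3cases : ∀ c : Fin 3, c = 0 ∨ c = 1 ∨ c = 2 := by decide

lemma greedy_done {V : Type*} [Fintype V] (G : SimpleGraph V) (K : ℕ)
    (f : V → Option (Fin 3))
    (hall : ∀ v, f v ≠ none)
    (h0 : ∀ v u, G.Adj v u → f v = some 0 → f u ≠ some 0)
    (h1 : ∀ v u, G.Adj v u → f v = some 1 → f u ≠ some 1)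
    (h2 : ∀ v, f v = some 2 → {u | G.Adj v u ∧ f u ≠ some 0 ∧ f u ≠ some 1}.ncard ≤ K) :
    ∃ g : V → Fin 3, ∀ v : V, {u | G.Adj v u ∧ g u = g v}.ncard ≤ ![0,0,K] (g v) := by
  refine ⟨fun v => (f v).getD 0, fun v => ?_⟩
  obtain ⟨c, hc⟩ : ∃ c, f v = some c := Option.ne_none_iff_exists'.mp (hall v)
  have hempty : ∀ c', f v = some c' →
      (∀ u, G.Adj v u → f u ≠ some c') →
      {u | G.Adj v u ∧ (f u).getD 0 = (f v).getD 0} = ∅ := by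
    intro c' hc' hind
    ext u
    simp only [Set.mem_setOf_eq, Set.mem_empty_iff_false, iff_false, not_and]
    intro hadj hequ
    obtain ⟨cu, hcu⟩ : ∃ cu, f u = some cu := Option.ne_none_iff_exists'.mp (hall u)
    rw [hcu, hc', Option.getD_some, Option.getD_some] at hequ
    exact hind u hadj (by rw [hcu, hequ])
  rcases fin3cases c with h | h | h <;> subst h
  · rw [hempty 0 hc (fun u hu => h0 v u hu hc)]
    simp [hc]
  · rw [hempty 1 hc (fun u hu => h1 v u hu hc)]
    simp [hc]
  · have hsub : {u | G.Adj v u ∧ (f u).getD 0 = (f v).getD 0} ⊆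
        {u | G.Adj v u ∧ f u ≠ some 0 ∧ f u ≠ some 1} := by
      rintro u ⟨hadj, hequ⟩
      obtain ⟨cu, hcu⟩ : ∃ cu, f u = some cu := Option.ne_none_iff_exists'.mp (hall u)
      rw [hcu, hc, Option.getD_some, Option.getD_some] at hequ
      subst hequ
      exact ⟨hadj, by rw [hcu]; simp, by rw [hcu]; simp⟩
    refine le_trans (Set.ncard_le_ncard hsub (Set.toFinite _)) ?_
    have hg : ((fun v => (f v).getD 0) v) = 2 := by simp [hc]
    rw [hg]
    exact h2 v hc

lemma greedy {V : Type*} [Fintype V] (G : SimpleGraph V) (K : ℕ) (S : Set V)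
    (hlow : ∀ v ∉ S, (G.neighborSet v).ncard ≤ K + 2) :
    ∀ n : ℕ, ∀ f : V → Option (Fin 3),
      {v | f v = none}.ncard ≤ n →
      (∀ v ∈ S, f v ≠ none) →
      (∀ v u, G.Adj v u → f v = some 0 → f u ≠ some 0) →
      (∀ v u, G.Adj v u → f v = some 1 → f u ≠ some 1) →
      (∀ v, f v = some 2 → {u | G.Adj v u ∧ f u ≠ some 0 ∧ f u ≠ some 1}.ncard ≤ K) →
      ∃ g : V → Fin 3, ∀ v : V, {u | G.Adj v u ∧ g u = g v}.ncard ≤ ![0,0,K] (g v) := by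
  intro n
  induction n with
  | zero =>
    intro f hn hS h0 h1 h2
    refine greedy_done G K f (fun v => ?_) h0 h1 h2
    by_contra h
    have hmem : v ∈ {v | f v = none} := h
    have := (Set.ncard_pos (Set.toFinite _)).mpr ⟨v, hmem⟩
    omega
  | succ n ih =>
    intro f hn hS h0 h1 h2
    by_cases hex : ∃ v, f v = none
    · obtain ⟨v, hv⟩ := hex
      classical
      have hvS : v ∉ S := fun h => hS v h hv
      have hcard' : ∀ c : Fin 3, {u | Function.update f v (some c) u = none}.ncard ≤ n := by
        intro c
        have hsub : {u | Function.update f v (some c) u = none} ⊆ {u | f u = none} \ {v} := by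
          intro u hu
          simp only [Set.mem_setOf_eq] at hu
          by_cases huv : u = v
          · subst huv; rw [Function.update_self] at hu; exact absurd hu (by simp)
          · rw [Function.update_of_ne huv] at hu; exact ⟨hu, huv⟩
        have hvmem : v ∈ {u | f u = none} := hv
        have hd := Set.ncard_diff_singleton_add_one hvmem (Set.toFinite _)
        have := Set.ncard_le_ncard hsub (Set.toFinite _)
        omega
      -- common lemmas for update with color c
      have hScov : ∀ c : Fin 3, ∀ w ∈ S, Function.update f v (some c) w ≠ none := by
        intro c w hw
        by_cases hwv : w = v
        · subst hwv; rw [Function.update_self]; simp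
        · rw [Function.update_of_ne hwv]; exact hS w hw
      -- monotone bad-set for old 2-colored vertices
      have hbadmono : ∀ c : Fin 3, ∀ w, w ≠ v →
          {u | G.Adj w u ∧ Function.update f v (some c) u ≠ some 0 ∧
            Function.update f v (some c) u ≠ some 1} ⊆
          {u | G.Adj w u ∧ f u ≠ some 0 ∧ f u ≠ some 1} := by
        rintro c w hwv u ⟨hadj, hu0, hu1⟩
        by_cases huv : u = v
        · subst huv; exact ⟨hadj, by rw [hv]; simp, by rw [hv]; simp⟩
        · rw [Function.update_of_ne huv] at hu0 hu1; exact ⟨hadj, hu0, hu1⟩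
      by_cases hn0 : ∃ u, G.Adj v u ∧ f u = some 0
      · by_cases hn1 : ∃ u, G.Adj v u ∧ f u = some 1
        · -- color v with 2
          set f' := Function.update f v (some 2) with hf'
          refine ih f' (hcard' 2) (hScov 2) ?_ ?_ ?_
          · intro x u hadj hx
            by_cases hxv : x = v
            · subst hxv; rw [hf', Function.update_self] at hx; exact absurd hx (by simp)
            · rw [hf', Function.update_of_ne hxv] at hx
              by_cases huv : u = v
              · subst huv; rw [hf', Function.update_self]; simp
              · rw [hf', Function.update_of_ne huv]; exact h0 x u hadj hx
          · intro x u hadj hx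
            by_cases hxv : x = v
            · subst hxv; rw [hf', Function.update_self] at hx; exact absurd hx (by simp)
            · rw [hf', Function.update_of_ne hxv] at hx
              by_cases huv : u = v
              · subst huv; rw [hf', Function.update_self]; simp
              · rw [hf', Function.update_of_ne huv]; exact h1 x u hadj hx
          · intro w hw
            by_cases hwv : w = v
            · subst hwv
              obtain ⟨u0, hu0a, hu0c⟩ := hn0
              obtain ⟨u1, hu1a, hu1c⟩ := hn1
              have hne01 : u0 ≠ u1 := by
                intro h; rw [h, hu1c] at hu0c; exact absurd hu0c (by simp)
              have hsub2 : {u | G.Adj w u ∧ f' u ≠ some 0 ∧ f' u ≠ some 1} ⊆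
                  G.neighborSet w \ {u0, u1} := by
                rintro u ⟨hadj, hne0, hne1⟩
                refine ⟨hadj, ?_⟩
                simp only [Set.mem_insert_iff, Set.mem_singleton_iff]
                rintro (rfl | rfl)
                · exact hne0 (by rw [hf', Function.update_of_ne (G.ne_of_adj hu0a).symm, hu0c])
                · exact hne1 (by rw [hf', Function.update_of_ne (G.ne_of_adj hu1a).symm, hu1c])
              have hsubN : ({u0, u1} : Set V) ⊆ G.neighborSet w := by
                rintro u (rfl | rfl)
                · exact hu0a
                · exact hu1a
              have hd := Set.ncard_diff hsubN (Set.toFinite _)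
              have hp : ({u0, u1} : Set V).ncard = 2 := Set.ncard_pair hne01
              have hle := Set.ncard_le_ncard hsub2 (Set.toFinite _)
              have hN := hlow w hvS
              omega
            · refine le_trans (Set.ncard_le_ncard (hbadmono 2 w hwv) (Set.toFinite _)) ?_
              apply h2
              rw [hf', Function.update_of_ne hwv] at hw
              exact hw
        · -- color v with 1
          set f' := Function.update f v (some 1) with hf'
          refine ih f' (hcard' 1) (hScov 1) ?_ ?_ ?_
          · intro x u hadj hx
            by_cases hxv : x = v
            · subst hxv; rw [hf', Function.update_self] at hx; exact absurd hx (by simp)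
            · rw [hf', Function.update_of_ne hxv] at hx
              by_cases huv : u = v
              · subst huv; rw [hf', Function.update_self]; simp
              · rw [hf', Function.update_of_ne huv]; exact h0 x u hadj hx
          · intro x u hadj hx
            by_cases hxv : x = v
            · rw [hxv] at hadj hx
              rw [hf', Function.update_self] at hx
              intro hu
              by_cases huv : u = v
              · rw [huv] at hadj; exact G.irrefl hadj
              · rw [hf', Function.update_of_ne huv] at hu
                exact hn1 ⟨u, hadj, hu⟩
            · rw [hf', Function.update_of_ne hxv] at hx
              by_cases huv : u = v
              · subst huv; intro hu; rw [hf', Function.update_self] at hu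
                exact hn1 ⟨x, hadj.symm, hx⟩
              · rw [hf', Function.update_of_ne huv]; exact h1 x u hadj hx
          · intro w hw2
            by_cases hwv : w = v
            · subst hwv; rw [hf', Function.update_self] at hw2; exact absurd hw2 (by simp)
            · refine le_trans (Set.ncard_le_ncard (hbadmono 1 w hwv) (Set.toFinite _)) ?_
              apply h2
              rw [hf', Function.update_of_ne hwv] at hw2
              exact hw2
      · -- color v with 0
        set f' := Function.update f v (some 0) with hf'
        refine ih f' (hcard' 0) (hScov 0) ?_ ?_ ?_
        · intro x u hadj hx
          by_cases hxv : x = v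
          · rw [hxv] at hadj hx
            rw [hf', Function.update_self] at hx
            intro hu
            by_cases huv : u = v
            · rw [huv] at hadj; exact G.irrefl hadj
            · rw [hf', Function.update_of_ne huv] at hu
              exact hn0 ⟨u, hadj, hu⟩
          · rw [hf', Function.update_of_ne hxv] at hx
            by_cases huv : u = v
            · subst huv; intro hu; rw [hf', Function.update_self] at hu
              exact hn0 ⟨x, hadj.symm, hx⟩
            · rw [hf', Function.update_of_ne huv]; exact h0 x u hadj hx
        · intro x u hadj hx
          by_cases hxv : x = v
          · subst hxv; rw [hf', Function.update_self] at hx; exact absurd hx (by simp)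
          · rw [hf', Function.update_of_ne hxv] at hx
            by_cases huv : u = v
            · subst huv; rw [hf', Function.update_self]; simp
            · rw [hf', Function.update_of_ne huv]; exact h1 x u hadj hx
        · intro w hw2
          by_cases hwv : w = v
          · subst hwv; rw [hf', Function.update_self] at hw2; exact absurd hw2 (by simp)
          · refine le_trans (Set.ncard_le_ncard (hbadmono 0 w hwv) (Set.toFinite _)) ?_
            apply h2
            rw [hf', Function.update_of_ne hwv] at hw2
            exact hw2
    · push_neg at hex
      exact greedy_done G K f hex h0 h1 h2

-- small decide lemmas
lemma bits_spec : ∀ b0 b1 b2 b3 b4 b5 b6 b7 b8 b9 : Bool, ∀ k : Fin 10,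
    (b0.toNat + 2*b1.toNat + 4*b2.toNat + 8*b3.toNat + 16*b4.toNat + 32*b5.toNat +
      64*b6.toNat + 128*b7.toNat + 256*b8.toNat + 512*b9.toNat).testBit k.val
      = ![b0,b1,b2,b3,b4,b5,b6,b7,b8,b9] k := by decide

lemma pr_cover : ∀ i j : Fin 5, i ≠ j → ∃ e : Fin 10,
    ((pr e.val).1 = i.val ∧ (pr e.val).2 = j.val) ∨
    ((pr e.val).1 = j.val ∧ (pr e.val).2 = i.val) := by decide

set_option maxHeartbeats 2000000 in
/-- Let `G` be a finite triangle-free graph, `K ≥ 4`, and let `S` be the set of vertices of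
degree at least `K+3`. If `|S| ≤ 5`, every vertex not in `S` has degree at most `K+2`, and
every vertex has at least one neighbor, then `G` is `(0,0,K)`-colorable. -/
theorem triangle_free_few_high_colorable {V : Type*} [Fintype V] (G : SimpleGraph V)
    (K : ℕ) (hK : 4 ≤ K) (htf : G.CliqueFree 3)
    (S : Set V) (hS : S = {v : V | K + 3 ≤ (G.neighborSet v).ncard})
    (hcard : S.ncard ≤ 5)
    (hlow : ∀ v ∉ S, (G.neighborSet v).ncard ≤ K + 2)
    (hnbr : ∀ v : V, (G.neighborSet v).Nonempty) :
    ImpColorable G ![0, 0, K] := by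
  classical
  clear hS hnbr hK
  have no_tri : ∀ a b c : V, G.Adj a b → G.Adj b c → G.Adj a c → False := by
    intro a b c h1 h2 h3
    exact htf {a,b,c} (SimpleGraph.is3Clique_triple_iff.mpr ⟨h1, h3, h2⟩)
  -- embedding of S into Fin 5
  have hcard5 : Fintype.card ↥S ≤ Fintype.card (Fin 5) := by
    rw [Fintype.card_fin, ← Nat.card_eq_fintype_card, Nat.card_coe_set_eq]
    exact hcard
  obtain ⟨ι⟩ : Nonempty (↥S ↪ Fin 5) := Function.Embedding.nonempty_of_card_le hcard5
  set P : ℕ → Prop := fun e => ∃ a b : ↥S,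
      (ι a).val = (pr e).1 ∧ (ι b).val = (pr e).2 ∧ G.Adj ↑a ↑b with hP
  set B : ℕ → Bool := fun e => decide (P e) with hB
  set m : ℕ := (B 0).toNat + 2*(B 1).toNat + 4*(B 2).toNat + 8*(B 3).toNat +
      16*(B 4).toNat + 32*(B 5).toNat + 64*(B 6).toNat + 128*(B 7).toNat +
      256*(B 8).toNat + 512*(B 9).toNat with hm
  have hb1 : ∀ b : Bool, b.toNat ≤ 1 := by decide
  have hm1024 : m < 1024 := by
    rw [hm]
    have := hb1 (B 0); have := hb1 (B 1); have := hb1 (B 2); have := hb1 (B 3)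
    have := hb1 (B 4); have := hb1 (B 5); have := hb1 (B 6); have := hb1 (B 7)
    have := hb1 (B 8); have := hb1 (B 9)
    omega
  have htb : ∀ e : ℕ, e < 10 → m.testBit e = B e := by
    intro e he
    have h2 := bits_spec (B 0) (B 1) (B 2) (B 3) (B 4) (B 5) (B 6) (B 7) (B 8) (B 9) ⟨e, he⟩
    rw [hm]
    interval_cases e <;> exact h2
  -- decoding adjacency
  have hdec : ∀ i j : Fin 5, adjB m i.val j.val = true →
      ∃ a b : ↥S, ι a = i ∧ ι b = j ∧ G.Adj ↑a ↑b := by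
    intro i j h
    rw [adjB, List.any_eq_true] at h
    obtain ⟨e, he, hcond⟩ := h
    rw [List.mem_range] at he
    rw [Bool.and_eq_true, Bool.or_eq_true, Bool.and_eq_true, Bool.and_eq_true] at hcond
    obtain ⟨htbit, hor⟩ := hcond
    rw [htb e he, hB] at htbit
    have hPe : P e := of_decide_eq_true htbit
    obtain ⟨a, b, ha, hb, hab⟩ := hPe
    rcases hor with ⟨h1, h2⟩ | ⟨h1, h2⟩
    · rw [beq_iff_eq] at h1 h2
      exact ⟨a, b, Fin.ext (by rw [ha, h1]), Fin.ext (by rw [hb, h2]), hab⟩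
    · rw [beq_iff_eq] at h1 h2
      exact ⟨b, a, Fin.ext (by rw [hb, h2]), Fin.ext (by rw [ha, h1]), hab.symm⟩
  -- encoding adjacency
  have henc : ∀ a b : ↥S, G.Adj ↑a ↑b → adjB m (ι a).val (ι b).val = true := by
    intro a b hab
    have hne : ι a ≠ ι b := by
      intro h
      exact G.ne_of_adj hab (congrArg Subtype.val (ι.injective h))
    obtain ⟨e, hor⟩ := pr_cover (ι a) (ι b) hne
    rw [adjB, List.any_eq_true]
    refine ⟨e.val, List.mem_range.mpr e.isLt, ?_⟩
    rw [Bool.and_eq_true]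
    constructor
    · rw [htb e.val e.isLt, hB]
      apply decide_eq_true
      rcases hor with ⟨h1, h2⟩ | ⟨h1, h2⟩
      · exact ⟨a, b, h1.symm, h2.symm, hab⟩
      · exact ⟨b, a, h1.symm, h2.symm, hab.symm⟩
    · rw [Bool.or_eq_true, Bool.and_eq_true, Bool.and_eq_true]
      rcases hor with ⟨h1, h2⟩ | ⟨h1, h2⟩
      · exact Or.inl ⟨beq_iff_eq.mpr h1, beq_iff_eq.mpr h2⟩
      · exact Or.inr ⟨beq_iff_eq.mpr h1, beq_iff_eq.mpr h2⟩
  -- triangle-freeness of the mask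
  have noadjB : ∀ i j k : Fin 5,
      (adjB m i.val j.val && adjB m j.val k.val && adjB m i.val k.val) = false := by
    intro i j k
    by_contra hcon
    rw [Bool.not_eq_false, Bool.and_eq_true, Bool.and_eq_true] at hcon
    obtain ⟨⟨hij, hjk⟩, hik⟩ := hcon
    obtain ⟨a, b, ha, hb, hab⟩ := hdec i j hij
    obtain ⟨b', c, hb', hc, hbc⟩ := hdec j k hjk
    obtain ⟨a', c', ha', hc', hac⟩ := hdec i k hik
    have hba : b' = b := ι.injective (hb'.trans hb.symm)
    have haa : a' = a := ι.injective (ha'.trans ha.symm)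
    have hcc : c' = c := ι.injective (hc'.trans hc.symm)
    rw [hba] at hbc
    rw [haa, hcc] at hac
    exact no_tri ↑a ↑b ↑c hab hbc hac
  have htfB : triFreeB m = true := by
    rw [triFreeB, List.all_eq_true]
    intro t ht
    fin_cases ht
    · show (!(adjB m 0 1 && adjB m 1 2 && adjB m 0 2)) = true
      rw [show (adjB m 0 1 && adjB m 1 2 && adjB m 0 2) = false from noadjB 0 1 2]
      rfl
    · show (!(adjB m 0 1 && adjB m 1 3 && adjB m 0 3)) = true
      rw [show (adjB m 0 1 && adjB m 1 3 && adjB m 0 3) = false from noadjB 0 1 3]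
      rfl
    · show (!(adjB m 0 1 && adjB m 1 4 && adjB m 0 4)) = true
      rw [show (adjB m 0 1 && adjB m 1 4 && adjB m 0 4) = false from noadjB 0 1 4]
      rfl
    · show (!(adjB m 0 2 && adjB m 2 3 && adjB m 0 3)) = true
      rw [show (adjB m 0 2 && adjB m 2 3 && adjB m 0 3) = false from noadjB 0 2 3]
      rfl
    · show (!(adjB m 0 2 && adjB m 2 4 && adjB m 0 4)) = true
      rw [show (adjB m 0 2 && adjB m 2 4 && adjB m 0 4) = false from noadjB 0 2 4]
      rfl
    · show (!(adjB m 0 3 && adjB m 3 4 && adjB m 0 4)) = true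
      rw [show (adjB m 0 3 && adjB m 3 4 && adjB m 0 4) = false from noadjB 0 3 4]
      rfl
    · show (!(adjB m 1 2 && adjB m 2 3 && adjB m 1 3)) = true
      rw [show (adjB m 1 2 && adjB m 2 3 && adjB m 1 3) = false from noadjB 1 2 3]
      rfl
    · show (!(adjB m 1 2 && adjB m 2 4 && adjB m 1 4)) = true
      rw [show (adjB m 1 2 && adjB m 2 4 && adjB m 1 4) = false from noadjB 1 2 4]
      rfl
    · show (!(adjB m 1 3 && adjB m 3 4 && adjB m 1 4)) = true
      rw [show (adjB m 1 3 && adjB m 3 4 && adjB m 1 4) = false from noadjB 1 3 4]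
      rfl
    · show (!(adjB m 2 3 && adjB m 3 4 && adjB m 2 4)) = true
      rw [show (adjB m 2 3 && adjB m 3 4 && adjB m 2 4) = false from noadjB 2 3 4]
      rfl
  rcases dec5 m hm1024 htfB with ⟨c, hp⟩ | ⟨⟨p0, p1, p2, p3, p4⟩, hq⟩
  · -- bipartite case
    have hproper : ∀ a b : ↥S, G.Adj ↑a ↑b →
        c.val.testBit (ι a).val ≠ c.val.testBit (ι b).val := by
      intro a b hab
      have h := henc a b hab
      rw [adjB, List.any_eq_true] at h
      obtain ⟨e, he, hcond⟩ := h
      rw [Bool.and_eq_true, Bool.or_eq_true, Bool.and_eq_true, Bool.and_eq_true] at hcond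
      obtain ⟨htbit, hor⟩ := hcond
      have hprop := List.all_eq_true.mp hp e he
      rw [Bool.or_eq_true, Bool.not_eq_true', bne_iff_ne] at hprop
      rcases hprop with hprop | hprop
      · rw [hprop] at htbit; exact absurd htbit (by simp)
      · rcases hor with ⟨h1, h2⟩ | ⟨h1, h2⟩
        · rw [beq_iff_eq] at h1 h2
          rw [h1, h2] at hprop
          exact hprop
        · rw [beq_iff_eq] at h1 h2
          rw [h1, h2] at hprop
          exact fun hcontra => hprop hcontra.symm
    set f₀ : V → Option (Fin 3) := fun x =>
      if hx : x ∈ S then some (if c.val.testBit (ι ⟨x, hx⟩).val then 1 else 0)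
      else none with hf₀
    have e01 : ∀ x : V, ∀ cc : Fin 3, f₀ x = some cc →
        ∃ hx : x ∈ S, (if c.val.testBit (ι ⟨x, hx⟩).val then (1 : Fin 3) else 0) = cc := by
      intro x cc h
      by_cases hx : x ∈ S
      · simp only [hf₀, dif_pos hx] at h
        exact ⟨hx, Option.some_injective _ h⟩
      · simp only [hf₀, dif_neg hx] at h
        exact absurd h (by simp)
    obtain ⟨g, hg⟩ := greedy G K S hlow (Fintype.card V) f₀
      (by
        have := Set.ncard_le_ncard (Set.subset_univ {v | f₀ v = none}) (Set.toFinite _)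
        rwa [Set.ncard_univ, Nat.card_eq_fintype_card] at this)
      (by
        intro v hv
        simp only [hf₀, dif_pos hv]
        exact Option.some_ne_none _)
      (by
        intro x u hadj hx hu
        obtain ⟨hxS, hxv⟩ := e01 x 0 hx
        obtain ⟨huS, huv⟩ := e01 u 0 hu
        have hbx : c.val.testBit (ι ⟨x, hxS⟩).val = false := by
          by_contra hb
          rw [Bool.not_eq_false] at hb
          rw [if_pos hb] at hxv
          exact absurd hxv (by decide)
        have hbu : c.val.testBit (ι ⟨u, huS⟩).val = false := by
          by_contra hb
          rw [Bool.not_eq_false] at hb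
          rw [if_pos hb] at huv
          exact absurd huv (by decide)
        exact hproper ⟨x, hxS⟩ ⟨u, huS⟩ hadj (by rw [hbx, hbu])
      )
      (by
        intro x u hadj hx hu
        obtain ⟨hxS, hxv⟩ := e01 x 1 hx
        obtain ⟨huS, huv⟩ := e01 u 1 hu
        have hbx : c.val.testBit (ι ⟨x, hxS⟩).val = true := by
          by_contra hb
          rw [Bool.not_eq_true] at hb
          rw [if_neg (by rw [hb]; exact Bool.false_ne_true)] at hxv
          exact absurd hxv (by decide)
        have hbu : c.val.testBit (ι ⟨u, huS⟩).val = true := by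
          by_contra hb
          rw [Bool.not_eq_true] at hb
          rw [if_neg (by rw [hb]; exact Bool.false_ne_true)] at huv
          exact absurd huv (by decide)
        exact hproper ⟨x, hxS⟩ ⟨u, huS⟩ hadj (by rw [hbx, hbu])
      )
      (by
        intro w hw
        obtain ⟨hwS, hwv⟩ := e01 w 2 hw
        by_cases hb : c.val.testBit (ι ⟨w, hwS⟩).val
        · rw [if_pos hb] at hwv; exact absurd hwv (by decide)
        · rw [if_neg hb] at hwv; exact absurd hwv (by decide)
      )
    exact ⟨g, hg⟩
  · -- C5 case
    simp only [cycB, Bool.and_eq_true, bne_iff_ne, ne_eq] at hq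
    obtain ⟨⟨⟨⟨⟨⟨⟨⟨⟨⟨⟨⟨⟨⟨h01v,h02v⟩,h03v⟩,h04v⟩,h12v⟩,h13v⟩,h14v⟩,h23v⟩,h24v⟩,h34v⟩,e01⟩,e12⟩,e23⟩,e34⟩,e40⟩ := hq
    obtain ⟨x0, x1, hx0, hx1, A01⟩ := hdec p0 p1 e01
    obtain ⟨a1, x2, ha1, hx2, A12⟩ := hdec p1 p2 e12
    obtain ⟨a2, x3, ha2, hx3, A23⟩ := hdec p2 p3 e23
    obtain ⟨a3, x4, ha3, hx4, A34⟩ := hdec p3 p4 e34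
    obtain ⟨a4, y0, ha4, hy0, A40⟩ := hdec p4 p0 e40
    have hA1 : a1 = x1 := ι.injective (ha1.trans hx1.symm)
    have hA2 : a2 = x2 := ι.injective (ha2.trans hx2.symm)
    have hA3 : a3 = x3 := ι.injective (ha3.trans hx3.symm)
    have hA4 : a4 = x4 := ι.injective (ha4.trans hx4.symm)
    have hY0 : y0 = x0 := ι.injective (hy0.trans hx0.symm)
    rw [hA1] at A12
    rw [hA2] at A23
    rw [hA3] at A34
    rw [hA4, hY0] at A40
    have hdiff : ∀ (a b : ↥S) {i j : Fin 5}, ι a = i → ι b = j → ¬(i.val = j.val) →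
        (↑a : V) ≠ ↑b := by
      intro a b i j hai hbj hij hc
      exact hij (by rw [← hai, ← hbj, Subtype.coe_injective hc])
    have d01 := hdiff x0 x1 hx0 hx1 h01v
    have d02 := hdiff x0 x2 hx0 hx2 h02v
    have d03 := hdiff x0 x3 hx0 hx3 h03v
    have d04 := hdiff x0 x4 hx0 hx4 h04v
    have d12 := hdiff x1 x2 hx1 hx2 h12v
    have d13 := hdiff x1 x3 hx1 hx3 h13v
    have d14 := hdiff x1 x4 hx1 hx4 h14v
    have d23 := hdiff x2 x3 hx2 hx3 h23v
    have d24 := hdiff x2 x4 hx2 hx4 h24v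
    have d34 := hdiff x3 x4 hx3 hx4 h34v
    -- chord non-adjacency
    have N02 : ¬ G.Adj ↑x0 ↑x2 := fun h => no_tri ↑x0 ↑x1 ↑x2 A01 A12 h
    have N13 : ¬ G.Adj ↑x1 ↑x3 := fun h => no_tri ↑x1 ↑x2 ↑x3 A12 A23 h
    -- S = {x0,...,x4}
    have hTsub : ({↑x0,↑x1,↑x2,↑x3,↑x4} : Set V) ⊆ S := by
      intro y hy
      simp only [Set.mem_insert_iff, Set.mem_singleton_iff] at hy
      rcases hy with rfl | rfl | rfl | rfl | rfl <;> exact Subtype.mem _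
    have hT5 : ({↑x0,↑x1,↑x2,↑x3,↑x4} : Set V).ncard = 5 := by
      rw [Set.ncard_insert_of_notMem (by simp [d01, d02, d03, d04]),
          Set.ncard_insert_of_notMem (by simp [d12, d13, d14]),
          Set.ncard_insert_of_notMem (by simp [d23, d24]),
          Set.ncard_insert_of_notMem (by simp [d34]),
          Set.ncard_singleton]
    have hSeq : S = ({↑x0,↑x1,↑x2,↑x3,↑x4} : Set V) :=
      (Set.eq_of_subset_of_ncard_le hTsub (by rw [hT5]; exact hcard)).symm
    set f₀ : V → Option (Fin 3) := fun y =>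
      if y = ↑x0 then some 0 else if y = ↑x1 then some 1 else if y = ↑x2 then some 0
      else if y = ↑x3 then some 1 else if y = ↑x4 then some 2
      else if G.Adj y ↑x4 then (if G.Adj y ↑x2 then some 1 else some 0) else none with hf₀
    have f0x0 : f₀ ↑x0 = some 0 := by simp [hf₀]
    have f0x1 : f₀ ↑x1 = some 1 := by simp [hf₀, d01.symm]
    have f0x2 : f₀ ↑x2 = some 0 := by simp [hf₀, d02.symm, d12.symm]
    have f0x3 : f₀ ↑x3 = some 1 := by simp [hf₀, d03.symm, d13.symm, d23.symm]
    have f0x4 : f₀ ↑x4 = some 2 := by simp [hf₀, d04.symm, d14.symm, d24.symm, d34.symm]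
    have c0 : ∀ y, f₀ y = some 0 →
        (y = ↑x0 ∨ y = ↑x2 ∨ (G.Adj y ↑x4 ∧ ¬ G.Adj y ↑x2)) := by
      intro y hy
      simp only [hf₀] at hy
      split_ifs at hy with w0 w1 w2 w3 w4 wa4 wa2
      · exact Or.inl w0
      · exact absurd hy (by decide)
      · exact Or.inr (Or.inl w2)
      · exact absurd hy (by decide)
      · exact absurd hy (by decide)
      · exact absurd hy (by decide)
      · exact Or.inr (Or.inr ⟨wa4, wa2⟩)
    have c1 : ∀ y, f₀ y = some 1 →
        (y = ↑x1 ∨ y = ↑x3 ∨ (G.Adj y ↑x4 ∧ G.Adj y ↑x2)) := by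
      intro y hy
      simp only [hf₀] at hy
      split_ifs at hy with w0 w1 w2 w3 w4 wa4 wa2
      · exact absurd hy (by decide)
      · exact Or.inl w1
      · exact absurd hy (by decide)
      · exact Or.inr (Or.inl w3)
      · exact absurd hy (by decide)
      · exact Or.inr (Or.inr ⟨wa4, wa2⟩)
      · exact absurd hy (by decide)
    have c2 : ∀ y, f₀ y = some 2 → y = ↑x4 := by
      intro y hy
      simp only [hf₀] at hy
      split_ifs at hy with w0 w1 w2 w3 w4 wa4 wa2
      · exact absurd hy (by decide)
      · exact absurd hy (by decide)
      · exact absurd hy (by decide)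
      · exact absurd hy (by decide)
      · exact w4
      · exact absurd hy (by decide)
      · exact absurd hy (by decide)
    obtain ⟨g, hg⟩ := greedy G K S hlow (Fintype.card V) f₀
      (by
        have := Set.ncard_le_ncard (Set.subset_univ {v | f₀ v = none}) (Set.toFinite _)
        rwa [Set.ncard_univ, Nat.card_eq_fintype_card] at this)
      (by
        intro v hv
        rw [hSeq] at hv
        simp only [Set.mem_insert_iff, Set.mem_singleton_iff] at hv
        rcases hv with rfl | rfl | rfl | rfl | rfl
        · rw [f0x0]; exact Option.some_ne_none _
        · rw [f0x1]; exact Option.some_ne_none _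
        · rw [f0x2]; exact Option.some_ne_none _
        · rw [f0x3]; exact Option.some_ne_none _
        · rw [f0x4]; exact Option.some_ne_none _)
      (by
        intro y u hadj hy hu
        rcases c0 y hy with rfl | rfl | ⟨hy4, hy2⟩ <;>
          rcases c0 u hu with rfl | rfl | ⟨hu4, hu2⟩
        · exact absurd hadj (G.irrefl)
        · exact absurd hadj N02
        · exact no_tri ↑x0 u ↑x4 hadj hu4 A40.symm
        · exact absurd hadj.symm N02
        · exact absurd hadj (G.irrefl)
        · exact hu2 hadj.symm
        · exact (no_tri y ↑x0 ↑x4 hadj A40.symm hy4).elim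
        · exact (hy2 hadj).elim
        · exact (no_tri y u ↑x4 hadj hu4 hy4).elim)
      (by
        intro y u hadj hy hu
        rcases c1 y hy with rfl | rfl | ⟨hy4, hy2⟩ <;>
          rcases c1 u hu with rfl | rfl | ⟨hu4, hu2⟩
        · exact absurd hadj (G.irrefl)
        · exact absurd hadj N13
        · exact (no_tri ↑x1 u ↑x2 hadj hu2 A12).elim
        · exact absurd hadj.symm N13
        · exact absurd hadj (G.irrefl)
        · exact (no_tri ↑x3 u ↑x4 hadj hu4 A34).elim
        · exact (no_tri y ↑x1 ↑x2 hadj A12 hy2).elim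
        · exact (no_tri y ↑x3 ↑x4 hadj A34 hy4).elim
        · exact (no_tri y u ↑x4 hadj hu4 hy4).elim)
      (by
        intro w hw
        obtain rfl := c2 w hw
        have hempty : {u | G.Adj ↑x4 u ∧ f₀ u ≠ some 0 ∧ f₀ u ≠ some 1} = ∅ := by
          ext u
          simp only [Set.mem_setOf_eq, Set.mem_empty_iff_false, iff_false]
          rintro ⟨hadj, h0', h1'⟩
          by_cases e0 : u = ↑x0
          · exact h0' (by rw [e0, f0x0])
          by_cases e1 : u = ↑x1
          · rw [e1] at hadj
            exact no_tri ↑x4 ↑x0 ↑x1 A40 A01 hadj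
          by_cases e2 : u = ↑x2
          · rw [e2] at hadj
            exact no_tri ↑x4 ↑x3 ↑x2 A34.symm A23.symm hadj
          by_cases e3 : u = ↑x3
          · exact h1' (by rw [e3, f0x3])
          by_cases e4 : u = ↑x4
          · rw [e4] at hadj
            exact G.irrefl hadj
          have hfu : f₀ u = if G.Adj u ↑x4 then (if G.Adj u ↑x2 then some 1 else some 0)
              else none := by
            simp only [hf₀]
            rw [if_neg e0, if_neg e1, if_neg e2, if_neg e3, if_neg e4]
          rw [if_pos hadj.symm] at hfu
          by_cases hu2 : G.Adj u ↑x2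
          · rw [if_pos hu2] at hfu
            exact h1' hfu
          · rw [if_neg hu2] at hfu
            exact h0' hfu
        rw [hempty, Set.ncard_empty]
        exact Nat.zero_le K)
    exact ⟨g, hg⟩
end
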